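/- arXiv:1806.02147 — 4 statements merged into one kernel-verified Lean document; each statement's English description precedes it below -/
import Mathlib

section
/- Let S : ℕ → ℤ satisfy S 0 = 0 and |S n − S (n−1)| = 1 for every n ≥ 1, let M n = max over 0 ≤ m ≤ n of S m, and let W = M − S. Define (Tη) n = 1 if W n − W (n−1) = −1 and (Tη) n = 0 otherwise, and let TS : ℕ → ℤ be the path encoding of Tη, i.e. (TS) 0 = 0 and (TS) n − (TS)(n−1) = 1 − 2 (Tη) n. Then (TS) n = 2 M n − S n for every n ∈ ℕ. -/
/-!
Both `TS` and `2M - S` start at `0`, so it suffices to compare their increments. A down-step of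
`S` keeps `M` and raises `W`; an up-step strictly below the running maximum keeps `M` and lowers
`W` (the carrier drops a ball); an up-step to a new maximum raises `M` by one and keeps `W = 0`.
In each case the increment of `2M - S` is `-1` exactly when a ball is dropped.
-/

open Finset

lemma Finset.sup'_Iic_zero {α : Type*} [LinearOrder α] (f : ℕ → α) :
    (Iic 0).sup' nonempty_Iic f = f 0 :=
  (sup'_congr nonempty_Iic (show Iic 0 = {0} by decide) fun _ _ => rfl).trans (sup'_singleton f)

lemma Finset.sup'_Iic_add_one {α : Type*} [LinearOrder α] (f : ℕ → α) (n : ℕ) :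
    (Iic (n + 1)).sup' nonempty_Iic f = max ((Iic n).sup' nonempty_Iic f) (f (n + 1)) :=
  calc (Iic (n + 1)).sup' nonempty_Iic f
      = (insert (n + 1) (Iic n)).sup' (insert_nonempty _ _) f :=
        sup'_congr _ (by rw [← Iio_insert, Iio_add_one_eq_Iic]) fun _ _ => rfl
    _ = max ((Iic n).sup' nonempty_Iic f) (f (n + 1)) := (sup'_insert ..).trans (sup_comm ..)

lemma pitman_increment {s s' m : ℤ} (hstep : |s' - s| = 1) (hsm : s ≤ m) :
    1 - 2 * (if (max m s' - s') - (m - s) = -1 then 1 else 0)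
      = (2 * max m s' - s') - (2 * m - s) := by
  rcases abs_eq zero_le_one |>.mp hstep with h | h <;> split_ifs <;> omega

/-- For a one-sided nearest-neighbour path `S` with running maximum `M` and
carrier `W = M - S`, the path encoding `TS` of the one-step box-ball transformed configuration
satisfies Pitman's identity `(TS) n = 2 M n - S n`. -/
theorem stmt_1 (S : ℕ → ℤ) (hS0 : S 0 = 0)
    (hS : ∀ n : ℕ, 1 ≤ n → |S n - S (n - 1)| = 1)
    (M : ℕ → ℤ) (hM : ∀ n : ℕ, M n = (Finset.Iic n).sup' Finset.nonempty_Iic S)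
    (W : ℕ → ℤ) (hW : ∀ n : ℕ, W n = M n - S n)
    (Tη : ℕ → ℤ)
    (hTη : ∀ n : ℕ, 1 ≤ n → Tη n = if W n - W (n - 1) = -1 then 1 else 0)
    (TS : ℕ → ℤ) (hTS0 : TS 0 = 0)
    (hTS : ∀ n : ℕ, 1 ≤ n → TS n - TS (n - 1) = 1 - 2 * Tη n) :
    ∀ n : ℕ, TS n = 2 * M n - S n := by
  have hM_succ (n : ℕ) : M (n + 1) = max (M n) (S (n + 1)) := by
    rw [hM, hM, sup'_Iic_add_one]
  have hS_le_M (n : ℕ) : S n ≤ M n := hM n ▸ le_sup' S (mem_Iic.mpr le_rfl)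
  intro n
  induction n with
  | zero => rw [hTS0, hM, sup'_Iic_zero, hS0]; rfl
  | succ n ih =>
    have hTS_step := hTS (n + 1) n.succ_pos
    have hS_step := hS (n + 1) n.succ_pos
    rw [hTη (n + 1) n.succ_pos, hW, hW] at hTS_step
    simp only [Nat.add_sub_cancel] at hTS_step hS_step
    have hincr := pitman_increment hS_step (hS_le_M n)
    rw [← hM_succ] at hincr
    linarith
end

section
/- Let η : ℤ → {0,1} be a particle configuration whose path encoding S lies in 𝒮^T, and let W n = M n − S n be its carrier. Then the transformed configuration satisfies (Tη) n = min(1 − η n, W (n−1)) for every n ∈ ℤ. -/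
/-!
The running maximum satisfies `M n = max (S n) (M (n - 1))`, so with unit steps
`M n - M (n - 1) = max 0 (ΔS n - W (n - 1))`: the maximum moves only on an up-step taken from
the maximum itself. Hence `ΔTS n = 2 max 0 (ΔS n - W (n - 1)) - ΔS n`, and the box-ball rule
becomes a two-case check on `ΔS n = ±1`.
-/

/-- The past maximum `M n = sup_{m ≤ n} S m` of a two-sided path. -/
noncomputable def ballMax (S : ℤ → ℤ) (n : ℤ) : ℤ := sSup (S '' Set.Iic n)

open Set

lemma bddAbove_image_Iic_of_bddAbove_image_Iic {S : ℤ → ℤ} {m : ℤ}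
    (hBdd : BddAbove (S '' Iic m)) (n : ℤ) : BddAbove (S '' Iic n) := by
  have hcover : Iic n ⊆ Iic m ∪ Icc m n := fun k hk => by
    rcases le_total k m with h | h
    · exact Or.inl h
    · exact Or.inr ⟨h, hk⟩
  refine BddAbove.mono (image_mono hcover) ?_
  rw [image_union]
  exact hBdd.union ((finite_Icc m n).image S).bddAbove

section PastBounded

variable {S : ℤ → ℤ} {m : ℤ}

lemma le_ballMax (hBdd : BddAbove (S '' Iic m)) (n : ℤ) : S n ≤ ballMax S n :=
  le_csSup (bddAbove_image_Iic_of_bddAbove_image_Iic hBdd n) ⟨n, self_mem_Iic, rfl⟩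

lemma ballMax_eq_max_ballMax_sub_one (hBdd : BddAbove (S '' Iic m)) (n : ℤ) :
    ballMax S n = max (S n) (ballMax S (n - 1)) := by
  rw [ballMax, ballMax, Iic_sub_one_eq_Iio, ← Iio_insert, image_insert_eq,
    csSup_insert ((bddAbove_image_Iic_of_bddAbove_image_Iic hBdd n).mono
      (image_mono Iio_subset_Iic_self)) (nonempty_Iio.image S)]

end PastBounded

lemma boxBall_rule_of_unit_step {d w : ℤ} (hd : |d| = 1) (hw : 0 ≤ w) :
    (if 2 * max 0 (d - w) - d = -1 then 1 else 0) = min (1 - if d = -1 then 1 else 0) w := by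
  rcases (abs_eq zero_le_one).mp hd with rfl | rfl <;> split_ifs <;>
    first | contradiction | omega

theorem stmt_2_general (S : ℤ → ℤ)
    (hS : ∀ n : ℤ, |S n - S (n - 1)| = 1)
    (hBdd : BddAbove (S '' Set.Iic 0))
    (η W TS Tη : ℤ → ℤ)
    (hη : ∀ n : ℤ, η n = if S n - S (n - 1) = -1 then 1 else 0)
    (hW : ∀ n : ℤ, W n = ballMax S n - S n)
    (hTS : ∀ n : ℤ, TS n = 2 * ballMax S n - S n - 2 * ballMax S 0)
    (hTη : ∀ n : ℤ, Tη n = if TS n - TS (n - 1) = -1 then 1 else 0) :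
    ∀ n : ℤ, Tη n = min (1 - η n) (W (n - 1)) := by
  intro n
  have hW_nonneg : 0 ≤ W (n - 1) := by
    rw [hW]; exact sub_nonneg.mpr (le_ballMax hBdd (n - 1))
  have hTS_step :
      TS n - TS (n - 1) = 2 * max 0 (S n - S (n - 1) - W (n - 1)) - (S n - S (n - 1)) := by
    rw [hTS, hTS, hW, ballMax_eq_max_ballMax_sub_one hBdd n]
    omega
  rw [hTη, hη, hTS_step]
  exact boxBall_rule_of_unit_step (hS n) hW_nonneg

/-- For a two-sided particle configuration `η` whose path encoding `S` lies in
`𝒮^T` (i.e. `{S n : n ≤ 0}` is bounded above), with carrier `W = M - S` and transformed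
configuration `Tη` read off from the Pitman transform `TS = 2M - S - 2 M 0`, one has the
box-ball update rule `(Tη) n = min (1 - η n) (W (n-1))`. -/
theorem stmt_2 (S : ℤ → ℤ) (hS0 : S 0 = 0)
    (hS : ∀ n : ℤ, |S n - S (n - 1)| = 1)
    (hBdd : BddAbove (S '' Set.Iic 0))
    (η W TS Tη : ℤ → ℤ)
    (hη : ∀ n : ℤ, η n = if S n - S (n - 1) = -1 then 1 else 0)
    (hW : ∀ n : ℤ, W n = ballMax S n - S n)
    (hTS : ∀ n : ℤ, TS n = 2 * ballMax S n - S n - 2 * ballMax S 0)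
    (hTη : ∀ n : ℤ, Tη n = if TS n - TS (n - 1) = -1 then 1 else 0) :
    ∀ n : ℤ, Tη n = min (1 - η n) (W (n - 1)) :=
  stmt_2_general S hS hBdd η W TS Tη hη hW hTS hTη
end

section
/- Let S ∈ 𝒮^{inv} satisfy lim_{n→+∞} S n = +∞. Then the set {S n : n ≤ 0} is bounded above (so M 0 is finite), I n = inf_{m ≥ n} S m tends to +∞, and lim_{n→+∞} M n / I n = 1 (limit of real ratios, where M n = sup_{m ≤ n} S m). -/
/-- The future minimum `I n = inf_{m ≥ n} S m` of a two-sided path. -/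
noncomputable def ballMin (S : ℤ → ℤ) (n : ℤ) : ℤ := sInf (S '' Set.Ici n)

/-- Pitman's transform `(TS) n = 2 M n - S n - 2 M 0`. -/
noncomputable def Tbb (S : ℤ → ℤ) : ℤ → ℤ := fun n => 2 * ballMax S n - S n - 2 * ballMax S 0

/-- The inverse transform `(T⁻¹S) n = 2 I n - S n - 2 I 0`. -/
noncomputable def TbbInv (S : ℤ → ℤ) : ℤ → ℤ := fun n => 2 * ballMin S n - S n - 2 * ballMin S 0

/-- The `k`-th iterate `T^k`, using `T` for `k ≥ 0` and `T⁻¹` for `k < 0`. -/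
noncomputable def Titer (k : ℤ) (S : ℤ → ℤ) : ℤ → ℤ :=
  if 0 ≤ k then Tbb^[k.toNat] S else TbbInv^[(-k).toNat] S

/-- `S ∈ 𝒮⁰`: a two-sided nearest-neighbour path started at `0`. -/
def inS0 (S : ℤ → ℤ) : Prop := S 0 = 0 ∧ ∀ n : ℤ, |S n - S (n - 1)| = 1

/-- `S ∈ 𝒮^{rev}`: the reversible set. -/
def inSrev (S : ℤ → ℤ) : Prop :=
  inS0 S ∧ BddAbove (S '' Set.Iic 0) ∧ BddBelow (S '' Set.Ici 0) ∧
    Filter.limsup (fun n : ℤ => ((S n : ℝ) : EReal)) Filter.atTop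
      = ⨆ n : ℤ, ((S n : ℝ) : EReal) ∧
    Filter.liminf (fun n : ℤ => ((S n : ℝ) : EReal)) Filter.atBot
      = ⨅ n : ℤ, ((S n : ℝ) : EReal)

/-- `S ∈ 𝒮^{inv}`: all iterates of the dynamics lie in the reversible set. -/
def inSinv (S : ℤ → ℤ) : Prop := ∀ k : ℤ, inSrev (Titer k S)

/-!
The past maximum `M` and the future minimum `I` of a path are compared through the inverse
transform. Boundedness below of `T⁻¹S` says `S ≤ 2 I + C`. Conversely, a bound
`a · T⁻¹S ≤ b · I(T⁻¹S) + C` improves to `b · S ≤ (2b - a) · I + C'`: at the last time `n ≤ m`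
with `S n ≤ I m`, one has `S n = I n = I m`, so `T⁻¹S n` is essentially `I m`, while
`I(T⁻¹S) n ≤ T⁻¹S m = 2 I m - S m - 2 I 0`. Running this through the iterates `T⁻ʲS`, all of
which lie in `𝒮^{rev}`, gives `(k + 1) S ≤ (k + 2) I + C_k` for every `k`, hence
`(k + 1) M ≤ (k + 2) I + C_k'`, and since `I ≤ M` and `I → ∞` the ratio `M / I` tends to `1`.
-/

open Filter Topology

lemma tendsto_div_nhds_one_of_forall_nat {α : Type*} {l : Filter α} {f g : α → ℝ}
    (hg : Tendsto g l atTop) (hgf : ∀ᶠ x in l, g x ≤ f x)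
    (hfg : ∀ k : ℕ, ∃ C, ∀ᶠ x in l, (k + 1) * f x ≤ (k + 2) * g x + C) :
    Tendsto (fun x => f x / g x) l (𝓝 1) := by
  refine tendsto_order.2 ⟨fun a ha => ?_, fun b hb => ?_⟩
  · filter_upwards [hgf, hg.eventually_gt_atTop 0] with x hx hx0
    exact ha.trans_le ((one_le_div hx0).2 hx)
  · obtain ⟨k, hk⟩ := exists_nat_one_div_lt (show (0 : ℝ) < (b - 1) / 2 by linarith)
    obtain ⟨C, hC⟩ := hfg k
    have hk' : 2 < ((k : ℝ) + 1) * (b - 1) := by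
      rw [div_lt_iff₀ (by positivity)] at hk
      linarith
    filter_upwards [hC, hg.eventually_gt_atTop 0, hg.eventually_gt_atTop C] with x hx hx0 hxC
    rw [div_lt_iff₀ hx0]
    nlinarith

section BallMinMax

variable {S : ℤ → ℤ}

lemma BddBelow.image_Ici_of_le {m n : ℤ} (h : BddBelow (S '' Set.Ici m)) (hmn : m ≤ n) :
    BddBelow (S '' Set.Ici n) :=
  h.mono (Set.image_mono (Set.Ici_subset_Ici.2 hmn))

lemma BddAbove.image_Iic {m : ℤ} (h : BddAbove (S '' Set.Iic m)) (n : ℤ) :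
    BddAbove (S '' Set.Iic n) := by
  refine (h.union ((Set.finite_Icc m n).image S).bddAbove).mono ?_
  rintro _ ⟨j, hj, rfl⟩
  rcases le_total j m with hjm | hmj
  · exact Or.inl ⟨j, hjm, rfl⟩
  · exact Or.inr ⟨j, ⟨hmj, hj⟩, rfl⟩

lemma ballMin_le_apply {n m : ℤ} (h : BddBelow (S '' Set.Ici n)) (hm : n ≤ m) :
    ballMin S n ≤ S m :=
  csInf_le h ⟨m, hm, rfl⟩

lemma le_ballMin {n B : ℤ} (h : ∀ m, n ≤ m → B ≤ S m) : B ≤ ballMin S n :=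
  le_csInf ⟨S n, n, Set.self_mem_Ici, rfl⟩ (by rintro _ ⟨m, hm, rfl⟩; exact h m hm)

lemma ballMin_mono {n m : ℤ} (h : BddBelow (S '' Set.Ici n)) (hm : n ≤ m) :
    ballMin S n ≤ ballMin S m :=
  le_ballMin fun _ hj => ballMin_le_apply h (hm.trans hj)

lemma apply_le_ballMax {n m : ℤ} (h : BddAbove (S '' Set.Iic n)) (hm : m ≤ n) :
    S m ≤ ballMax S n :=
  le_csSup h ⟨m, hm, rfl⟩

lemma exists_apply_eq_ballMax {n : ℤ} (h : BddAbove (S '' Set.Iic n)) :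
    ∃ m ≤ n, S m = ballMax S n :=
  Int.csSup_mem (Set.image_nonempty.2 Set.nonempty_Iic) h

lemma ballMin_le_ballMax {n : ℤ} (hmin : BddBelow (S '' Set.Ici n))
    (hmax : BddAbove (S '' Set.Iic n)) : ballMin S n ≤ ballMax S n :=
  (ballMin_le_apply hmin le_rfl).trans (apply_le_ballMax hmax le_rfl)

lemma tendsto_ballMin_atTop (h : Tendsto S atTop atTop) :
    Tendsto (fun n => ballMin S n) atTop atTop := by
  refine tendsto_atTop.2 fun B => ?_
  obtain ⟨N, hN⟩ := (tendsto_atTop.1 h B).exists_forall_of_atTop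
  filter_upwards [eventually_ge_atTop N] with n hn
  exact le_ballMin fun m hm => hN m (hn.trans hm)

/-- The witness is the last time `n ≤ m` with `S n ≤ I m`; as `S` climbs by at most one per
step, `S n = I m` there. -/
lemma exists_apply_eq_ballMin (hstep : ∀ i, S (i + 1) ≤ S i + 1) {j m : ℤ}
    (hbdd : BddBelow (S '' Set.Ici m)) (hjm : j ≤ m) (hj : S j ≤ ballMin S m) :
    ∃ n ∈ Set.Icc j m, S n = ballMin S m ∧ ballMin S n = ballMin S m := by
  obtain ⟨n, ⟨hnm, hn⟩, hlast⟩ := Int.exists_greatest_of_bdd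
    (P := fun i => i ≤ m ∧ S i ≤ ballMin S m) ⟨m, fun _ h => h.1⟩ ⟨j, hjm, hj⟩
  have hstrict : ∀ i, n < i → i ≤ m → ballMin S m < S i := fun i hni him =>
    lt_of_not_ge fun hi => (hlast i ⟨him, hi⟩).not_gt hni
  have hSn : S n = ballMin S m := by
    refine le_antisymm hn ?_
    rcases hnm.lt_or_eq with hlt | rfl
    · linarith [hstrict (n + 1) (lt_add_one n) hlt, hstep n]
    · exact ballMin_le_apply hbdd le_rfl
  have hleast : IsLeast (S '' Set.Ici n) (S n) := by
    refine ⟨⟨n, Set.self_mem_Ici, rfl⟩, ?_⟩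
    rintro _ ⟨i, hi, rfl⟩
    rcases (Set.mem_Ici.1 hi).lt_or_eq with hni | rfl
    · rcases le_or_gt i m with him | hmi
      · exact hSn ▸ (hstrict i hni him).le
      · exact hSn ▸ ballMin_le_apply hbdd hmi.le
    · exact le_rfl
  exact ⟨n, ⟨hlast j ⟨hjm, hj⟩, hnm⟩, hSn, hleast.csInf_eq.trans hSn⟩

lemma inS0.apply_add_one_le (hS : inS0 S) (i : ℤ) : S (i + 1) ≤ S i + 1 := by
  have h := hS.2 (i + 1)
  rw [add_sub_cancel_right] at h
  linarith [le_abs_self (S (i + 1) - S i)]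

end BallMinMax

def BoundedByBallMin (S : ℤ → ℤ) (a b : ℤ) : Prop :=
  ∃ C, ∀ m, 0 ≤ m → a * S m ≤ b * ballMin S m + C

namespace BoundedByBallMin

variable {S : ℤ → ℤ}

lemma one_two_of_bddBelow_tbbInv (h : BddBelow (TbbInv S '' Set.Ici 0)) :
    BoundedByBallMin S 1 2 := by
  obtain ⟨c, hc⟩ := h
  refine ⟨-2 * ballMin S 0 - c, fun m hm => ?_⟩
  have h := hc ⟨m, Set.mem_Ici.2 hm, rfl⟩
  simp only [TbbInv] at h
  linarith

lemma of_tbbInv (hS : inS0 S) (hbdd : BddBelow (S '' Set.Ici 0))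
    (hbdd' : BddBelow (TbbInv S '' Set.Ici 0)) {a b : ℤ} (ha : 0 ≤ a) (hb : 0 ≤ b)
    (h : BoundedByBallMin (TbbInv S) a b) : BoundedByBallMin S b (2 * b - a) := by
  obtain ⟨C₀, hC₀⟩ := one_two_of_bddBelow_tbbInv hbdd'
  obtain ⟨C, hC⟩ := h
  refine ⟨max (b * C₀) ((2 * a - 2 * b) * ballMin S 0 + C), fun m hm => ?_⟩
  rcases lt_or_ge (ballMin S m) 0 with hneg | hnonneg
  · have h₁ := mul_le_mul_of_nonneg_left (hC₀ m hm) hb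
    have h₂ := mul_nonpos_of_nonneg_of_nonpos ha hneg.le
    linarith [le_max_left (b * C₀) ((2 * a - 2 * b) * ballMin S 0 + C)]
  · obtain ⟨n, ⟨hn0, hnm⟩, hSn, hIn⟩ := exists_apply_eq_ballMin hS.apply_add_one_le
      (hbdd.image_Ici_of_le hm) hm (by rwa [hS.1])
    have h₁ := hC n hn0
    have h₂ := mul_le_mul_of_nonneg_left
      (ballMin_le_apply (hbdd'.image_Ici_of_le hn0) hnm) hb
    simp only [TbbInv] at h₁ h₂
    rw [hSn, hIn] at h₁
    linarith [le_max_right (b * C₀) ((2 * a - 2 * b) * ballMin S 0 + C)]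

lemma of_iterate_tbbInv (k : ℕ) (hS : ∀ j : ℕ, inS0 (TbbInv^[j] S))
    (hbdd : ∀ j : ℕ, BddBelow (TbbInv^[j] S '' Set.Ici 0)) :
    BoundedByBallMin S (k + 1) (k + 2) := by
  induction k generalizing S with
  | zero =>
    simpa using one_two_of_bddBelow_tbbInv (hbdd 1)
  | succ k ih =>
    have h := (ih (fun j => hS (j + 1)) (fun j => hbdd (j + 1))).of_tbbInv (S := S) (hS 0)
      (hbdd 0) (hbdd 1) (by positivity) (by positivity)
    convert h using 1 <;> push_cast <;> ring

lemma exists_mul_ballMax_le {a b : ℤ} (h : BoundedByBallMin S a b) (ha : 0 ≤ a) (hb : 0 ≤ b)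
    (hmax : BddAbove (S '' Set.Iic 0)) (hmin : BddBelow (S '' Set.Ici 0)) :
    ∃ C, ∀ n, 0 ≤ n → a * ballMax S n ≤ b * ballMin S n + C := by
  obtain ⟨C, hC⟩ := h
  refine ⟨max C (a * ballMax S 0 - b * ballMin S 0), fun n hn => ?_⟩
  obtain ⟨j, hjn, hj⟩ := exists_apply_eq_ballMax (hmax.image_Iic n)
  rw [← hj]
  rcases le_or_gt j 0 with hj0 | hj0
  · have h₁ := mul_le_mul_of_nonneg_left (apply_le_ballMax hmax hj0) ha
    have h₂ := mul_le_mul_of_nonneg_left (ballMin_mono hmin hn) hb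
    linarith [le_max_right C (a * ballMax S 0 - b * ballMin S 0)]
  · have h₁ := mul_le_mul_of_nonneg_left (ballMin_mono (hmin.image_Ici_of_le hj0.le) hjn) hb
    linarith [hC j hj0.le, le_max_left C (a * ballMax S 0 - b * ballMin S 0)]

end BoundedByBallMin

lemma inSinv.inSrev_iterate_tbbInv {S : ℤ → ℤ} (hS : inSinv S) (j : ℕ) :
    inSrev (TbbInv^[j] S) := by
  rcases j with _ | i
  · simpa [Titer] using hS 0
  · have h := hS (-((i : ℤ) + 1))
    rwa [Titer, if_neg (by omega), show (-(-((i : ℤ) + 1))).toNat = i + 1 by omega] at h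

/-- If `S ∈ 𝒮^{inv}` and `S n → +∞` as `n → +∞`, then `{S n : n ≤ 0}` is
bounded above, the future minimum `I n` tends to `+∞`, and `M n / I n → 1` as `n → +∞`. -/
theorem stmt_9 (S : ℤ → ℤ) (hS : inSinv S)
    (hdiv : Filter.Tendsto S Filter.atTop Filter.atTop) :
    BddAbove (S '' Set.Iic 0) ∧
    Filter.Tendsto (fun n : ℤ => ballMin S n) Filter.atTop Filter.atTop ∧
    Filter.Tendsto (fun n : ℤ => (ballMax S n : ℝ) / (ballMin S n : ℝ))
      Filter.atTop (nhds 1) := by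
  have hrev := hS.inSrev_iterate_tbbInv
  obtain ⟨-, hmax, hmin, -⟩ := hrev 0
  have hI := tendsto_ballMin_atTop hdiv
  refine ⟨hmax, hI, tendsto_div_nhds_one_of_forall_nat (tendsto_intCast_atTop_atTop.comp hI)
    ?_ fun k => ?_⟩
  · filter_upwards [eventually_ge_atTop 0] with n hn
    exact_mod_cast ballMin_le_ballMax (hmin.image_Ici_of_le hn) (hmax.image_Iic n)
  · obtain ⟨C, hC⟩ := (BoundedByBallMin.of_iterate_tbbInv k (fun j => (hrev j).1)
      (fun j => (hrev j).2.2.1)).exists_mul_ballMax_le (by positivity) (by positivity) hmax hmin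
    refine ⟨C, ?_⟩
    filter_upwards [eventually_ge_atTop 0] with n hn
    exact_mod_cast hC n hn
end

section
/- Let S : ℝ → ℝ be continuous with S 0 = 0 and with the set {S y : y ≤ x} bounded above for every x ∈ ℝ, and define M x = sup_{y ≤ x} S y. Suppose the pair (Y, A) satisfies: (i) Y : ℝ → ℝ is continuous, Y x ≥ 0 for all x, and liminf_{x→−∞} Y x = 0; (ii) A : ℝ → ℝ is continuous and nondecreasing; (iii) the Lebesgue–Stieltjes measure associated to A assigns zero mass to the set {x : Y x > 0}; (iv) S x = A x − Y x for all x. Then Y x = M x − S x and A x = M x for all x ∈ ℝ; moreover the pair (M − S, M) does satisfy conditions (i)–(iv). In addition, any pair (Ỹ, Ã) satisfying (ii), (iii), (iv) with Ỹ continuous and nonnegative (but not necessarily with liminf zero) satisfies M x − S x ≤ Ỹ x and M x ≤ Ã x for all x. -/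
/-!
Write `M x = sup_{y ≤ x} S y`. If `S = A - Y` with `Y ≥ 0` and `A` nondecreasing, then
`A x ≥ A y ≥ S y` for all `y ≤ x`, so `M ≤ A`. Conversely, fix `y ≤ x` and let `c` be the last
zero of `Y` in `[y, x]`. The measure of `A` does not charge `(c, x]`, where `Y > 0`, so
`A x = A c = S c ≤ M x`; if `Y` has no zero there, `A x = A y = S y + Y y ≤ M x + Y y`. Since `Y`
comes arbitrarily close to `0` near `-∞`, `A ≤ M`.

For existence, `M` is continuous and is constant on every interval on which `S < M`: a value of `S`
on such an interval exceeding the earlier maximum would be a point where `S = M`.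
-/

open MeasureTheory Filter Set

theorem liminf_coe_eq_zero_iff {α : Type*} {l : Filter α} {f : α → ℝ} (hf : ∀ x, 0 ≤ f x) :
    liminf (fun x => (f x : EReal)) l = 0 ↔ ∀ ε > 0, ∃ᶠ x in l, f x < ε := by
  have hge : 0 ≤ liminf (fun x => (f x : EReal)) l :=
    le_liminf_of_le (by isBoundedDefault) (.of_forall fun x => EReal.coe_nonneg.2 (hf x))
  rw [le_antisymm_iff, and_iff_left hge, liminf_le_iff]
  constructor
  · intro h ε hε
    exact (h ε (EReal.coe_pos.2 hε)).mono fun x hx => EReal.coe_lt_coe_iff.1 hx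
  · intro h y hy
    obtain ⟨ε, hε, hεy⟩ := EReal.lt_iff_exists_real_btwn.1 hy
    exact (h ε (EReal.coe_pos.1 hε)).mono fun x hx => (EReal.coe_lt_coe_iff.2 hx).trans hεy

theorem IsClosed.exists_mem_Icc_forall_Ioc_notMem {α : Type*}
    [ConditionallyCompleteLinearOrder α] [TopologicalSpace α] [OrderTopology α] {Z : Set α}
    (hZ : IsClosed Z) {a b : α} (hab : a ≤ b) :
    ∃ c ∈ Icc a b, (c = a ∨ c ∈ Z) ∧ ∀ t ∈ Ioc c b, t ∉ Z := by
  set T := Icc a b ∩ ({a} ∪ Z)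
  have hT : IsClosed T := isClosed_Icc.inter (isClosed_singleton.union hZ)
  have hTbdd : BddAbove T := ⟨b, fun t ht => ht.1.2⟩
  obtain ⟨hcI, hcZ⟩ := hT.csSup_mem ⟨a, left_mem_Icc.2 hab, Or.inl rfl⟩ hTbdd
  refine ⟨sSup T, hcI, hcZ, fun t ht htZ => ?_⟩
  exact not_lt_of_ge (le_csSup hTbdd ⟨⟨hcI.1.trans ht.1.le, ht.2⟩, Or.inr htZ⟩) ht.1

theorem StieltjesFunction.le_of_measure_Ioc_eq_zero {A : StieltjesFunction ℝ} {a b : ℝ}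
    (h : A.measure (Ioc a b) = 0) : A b ≤ A a := by
  rwa [StieltjesFunction.measure_Ioc, ENNReal.ofReal_eq_zero, sub_nonpos] at h

noncomputable def runningMax {α β : Type*} [Preorder α] [ConditionallyCompleteLattice β]
    (S : α → β) (x : α) : β :=
  sSup (S '' Iic x)

section Order

variable {α β : Type*} [Preorder α] [ConditionallyCompleteLattice β] {S : α → β}

theorem runningMax_mono (hBdd : ∀ x, BddAbove (S '' Iic x)) : Monotone (runningMax S) :=
  fun _ b hab =>
    csSup_le_csSup (hBdd b) (nonempty_Iic.image S) (image_mono (Iic_subset_Iic.2 hab))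

theorem le_runningMax (hBdd : ∀ x, BddAbove (S '' Iic x)) (x : α) : S x ≤ runningMax S x :=
  le_csSup (hBdd x) (mem_image_of_mem S self_mem_Iic)

theorem runningMax_le_of_monotone {A : α → β} (hA : Monotone A) (hSA : ∀ x, S x ≤ A x) (x : α) :
    runningMax S x ≤ A x :=
  csSup_le (nonempty_Iic.image S) <| by
    rintro _ ⟨y, hy, rfl⟩
    exact (hSA y).trans (hA hy)

end Order

theorem runningMax_eq_sup {α β : Type*} [LinearOrder α] [ConditionallyCompleteLattice β]
    {S : α → β} (hBdd : ∀ x, BddAbove (S '' Iic x)) {a b : α} (hab : a ≤ b) :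
    runningMax S b = runningMax S a ⊔ sSup (S '' Icc a b) := by
  rw [runningMax, ← Iic_union_Icc_eq_Iic hab, image_union, csSup_union (hBdd a)
    (nonempty_Iic.image S) ((hBdd b).mono (image_mono Icc_subset_Iic_self))
    ((nonempty_Icc.2 hab).image S)]
  rfl

section Real

variable {S : ℝ → ℝ}

theorem runningMax_le_add (hBdd : ∀ x, BddAbove (S '' Iic x)) {a b ε : ℝ} (hab : a ≤ b)
    (hS : ∀ t ∈ Icc a b, S t ≤ S a + ε) :
    runningMax S b ≤ runningMax S a + ε := by
  have hε : 0 ≤ ε := by linarith [hS a (left_mem_Icc.2 hab)]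
  rw [runningMax_eq_sup hBdd hab]
  refine sup_le (by linarith) (csSup_le ((nonempty_Icc.2 hab).image S) ?_)
  rintro _ ⟨t, ht, rfl⟩
  linarith [hS t ht, le_runningMax hBdd a]

theorem continuous_runningMax (hBdd : ∀ x, BddAbove (S '' Iic x)) (hS : Continuous S) :
    Continuous (runningMax S) := by
  refine Metric.continuous_iff.2 fun x₀ ε hε => ?_
  obtain ⟨δ, hδ, hSδ⟩ := Metric.continuous_iff.1 hS x₀ (ε / 4) (by positivity)
  have near : ∀ a b, a ≤ b → dist a x₀ < δ → dist b x₀ < δ →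
      runningMax S b ≤ runningMax S a + ε / 2 := by
    intro a b hab ha hb
    refine runningMax_le_add hBdd hab fun t ht => ?_
    have ht' : dist t x₀ < δ := by
      rw [Real.dist_eq, abs_lt] at ha hb ⊢
      constructor <;> linarith [ht.1, ht.2]
    have h₁ := abs_sub_lt_iff.1 (Real.dist_eq _ _ ▸ hSδ t ht')
    have h₂ := abs_sub_lt_iff.1 (Real.dist_eq _ _ ▸ hSδ a ha)
    linarith [h₁.1, h₂.2]
  refine ⟨δ, hδ, fun x hx => ?_⟩
  rw [Real.dist_eq, abs_sub_lt_iff]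
  have hx₀ : dist x₀ x₀ < δ := by rwa [dist_self]
  rcases le_total x x₀ with h | h
  · have := near x x₀ h hx hx₀
    have := runningMax_mono hBdd h
    constructor <;> linarith
  · have := near x₀ x h hx₀ hx
    have := runningMax_mono hBdd h
    constructor <;> linarith

theorem runningMax_eq_of_lt_on_Ioc (hBdd : ∀ x, BddAbove (S '' Iic x)) (hS : Continuous S)
    {a b : ℝ} (hab : a ≤ b) (hlt : ∀ t ∈ Ioc a b, S t < runningMax S t) :
    runningMax S b = runningMax S a := by
  refine le_antisymm ?_ (runningMax_mono hBdd hab)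
  by_contra! hgt
  obtain ⟨c, hc, hmax⟩ :=
    (isCompact_Icc.image hS).sSup_mem ((nonempty_Icc.2 hab).image S)
  have hbc : runningMax S b = S c := by
    rw [runningMax_eq_sup hBdd hab, ← hmax] at hgt ⊢
    exact sup_eq_right.2 (le_of_not_ge fun h => hgt.ne' (sup_eq_left.2 h))
  have hcb := runningMax_mono hBdd hc.2
  rcases hc.1.eq_or_lt with hac | hac
  · rw [← hac] at hbc
    linarith [le_runningMax hBdd a]
  · linarith [hlt c ⟨hac, hc.2⟩, le_runningMax hBdd c]

noncomputable def runningMaxStieltjes (hBdd : ∀ x, BddAbove (S '' Iic x)) (hS : Continuous S) :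
    StieltjesFunction ℝ where
  toFun := runningMax S
  mono' := runningMax_mono hBdd
  right_continuous' _ := (continuous_runningMax hBdd hS).continuousWithinAt

theorem runningMaxStieltjes_apply (hBdd : ∀ x, BddAbove (S '' Iic x)) (hS : Continuous S)
    (x : ℝ) :
    runningMaxStieltjes hBdd hS x = runningMax S x :=
  rfl

theorem runningMaxStieltjes_measure_lt (hBdd : ∀ x, BddAbove (S '' Iic x)) (hS : Continuous S) :
    (runningMaxStieltjes hBdd hS).measure {x | S x < runningMax S x} = 0 := by
  refine measure_null_of_locally_null _ fun x hx => ?_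
  have hU : IsOpen {t | S t < runningMax S t} := isOpen_lt hS (continuous_runningMax hBdd hS)
  obtain ⟨δ, hδ, hball⟩ := (nhds_basis_Ioo_pos x).mem_iff.1 (hU.mem_nhds hx)
  refine ⟨Ioc (x - δ / 2) (x + δ / 2),
    mem_nhdsWithin_of_mem_nhds (Ioc_mem_nhds (by linarith) (by linarith)), ?_⟩
  have hflat := runningMax_eq_of_lt_on_Ioc hBdd hS (a := x - δ / 2) (b := x + δ / 2)
    (by linarith) fun t ht => hball ⟨by linarith [ht.1], by linarith [ht.2]⟩
  rw [StieltjesFunction.measure_Ioc, runningMaxStieltjes_apply, runningMaxStieltjes_apply, hflat,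
    sub_self, ENNReal.ofReal_zero]

theorem frequently_runningMax_sub_lt (hBdd : ∀ x, BddAbove (S '' Iic x)) {ε : ℝ} (hε : 0 < ε) :
    ∃ᶠ x in atBot, runningMax S x - S x < ε := by
  refine frequently_atBot.2 fun b => ?_
  obtain ⟨_, ⟨y, hy, rfl⟩, hlt⟩ :=
    exists_lt_of_lt_csSup (nonempty_Iic.image S) (sub_lt_self (runningMax S b) hε)
  exact ⟨y, hy, by linarith [runningMax_mono hBdd (mem_Iic.1 hy)]⟩

end Real

section Decomposition

variable {S Y : ℝ → ℝ} {A : StieltjesFunction ℝ}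

theorem runningMax_le_stieltjes (hY : ∀ x, 0 ≤ Y x) (hSAY : ∀ x, S x = A x - Y x) (x : ℝ) :
    runningMax S x ≤ A x :=
  runningMax_le_of_monotone A.mono (fun y => by linarith [hSAY y, hY y]) x

theorem stieltjes_le_runningMax_add (hBdd : ∀ x, BddAbove (S '' Iic x)) (hY : ∀ x, 0 ≤ Y x)
    (hSAY : ∀ x, S x = A x - Y x) (hYc : Continuous Y) (hA : A.measure {x | 0 < Y x} = 0)
    {x y : ℝ} (hyx : y ≤ x) : A x ≤ runningMax S x + Y y := by
  obtain ⟨c, hc, hcY, hpos⟩ :=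
    (isClosed_singleton.preimage hYc).exists_mem_Icc_forall_Ioc_notMem hyx
  have hAc : A x ≤ A c := StieltjesFunction.le_of_measure_Ioc_eq_zero <|
    measure_mono_null (fun t ht => (hY t).lt_of_ne (Ne.symm (hpos t ht))) hA
  have hMc := runningMax_mono hBdd hc.2
  rcases hcY with rfl | hYc0
  · linarith [hSAY c, le_runningMax hBdd c]
  · have hYc0 : Y c = 0 := hYc0
    linarith [hSAY c, le_runningMax hBdd c, hY y]

theorem stieltjes_eq_runningMax (hBdd : ∀ x, BddAbove (S '' Iic x)) (hY : ∀ x, 0 ≤ Y x)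
    (hSAY : ∀ x, S x = A x - Y x) (hYc : Continuous Y) (hA : A.measure {x | 0 < Y x} = 0)
    (hlim : liminf (fun x => (Y x : EReal)) atBot = 0) (x : ℝ) : A x = runningMax S x := by
  refine le_antisymm (le_of_forall_pos_lt_add fun ε hε => ?_)
    (runningMax_le_stieltjes hY hSAY x)
  obtain ⟨y, hyx, hYy⟩ :=
    (((liminf_coe_eq_zero_iff hY).1 hlim ε hε).and_eventually (eventually_le_atBot x)).exists
  linarith [stieltjes_le_runningMax_add hBdd hY hSAY hYc hA hYy]

end Decomposition

theorem stmt_12_general (S : ℝ → ℝ) (hScont : Continuous S)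
    (hBdd : ∀ x : ℝ, BddAbove (S '' Set.Iic x)) :
    -- uniqueness: any solution of the Skorokhod problem equals (M - S, M)
    (∀ (Y : ℝ → ℝ) (A : StieltjesFunction ℝ), Continuous Y → (∀ x, 0 ≤ Y x) →
      Filter.liminf (fun x : ℝ => ((Y x : ℝ) : EReal)) Filter.atBot = 0 →
      Continuous (fun x => A x) → A.measure {x : ℝ | 0 < Y x} = 0 →
      (∀ x : ℝ, S x = A x - Y x) →
      ∀ x : ℝ, Y x = sSup (S '' Set.Iic x) - S x ∧ A x = sSup (S '' Set.Iic x)) ∧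
    -- existence: (M - S, M) satisfies conditions (i)-(iv)
    (∃ A : StieltjesFunction ℝ, (∀ x : ℝ, A x = sSup (S '' Set.Iic x)) ∧
      Continuous (fun x : ℝ => sSup (S '' Set.Iic x) - S x) ∧
      (∀ x : ℝ, 0 ≤ sSup (S '' Set.Iic x) - S x) ∧
      Filter.liminf (fun x : ℝ => ((sSup (S '' Set.Iic x) - S x : ℝ) : EReal))
        Filter.atBot = 0 ∧
      Continuous (fun x => A x) ∧
      A.measure {x : ℝ | 0 < sSup (S '' Set.Iic x) - S x} = 0 ∧
      (∀ x : ℝ, S x = A x - (sSup (S '' Set.Iic x) - S x))) ∧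
    -- minimality among all pairs satisfying (ii),(iii),(iv) with Ỹ continuous nonnegative
    (∀ (Y' : ℝ → ℝ) (A' : StieltjesFunction ℝ), Continuous Y' → (∀ x, 0 ≤ Y' x) →
      Continuous (fun x => A' x) → A'.measure {x : ℝ | 0 < Y' x} = 0 →
      (∀ x : ℝ, S x = A' x - Y' x) →
      ∀ x : ℝ, sSup (S '' Set.Iic x) - S x ≤ Y' x ∧ sSup (S '' Set.Iic x) ≤ A' x) := by
  simp only [show ∀ x, sSup (S '' Iic x) = runningMax S x from fun _ => rfl]
  have hYM : ∀ x, 0 ≤ runningMax S x - S x := fun x => sub_nonneg.2 (le_runningMax hBdd x)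
  refine ⟨fun Y A hYc hY hlim _ hA hSAY x => ?_,
    ⟨runningMaxStieltjes hBdd hScont, fun _ => rfl, ?_⟩,
    fun Y A _ hY _ _ hSAY x => ?_⟩
  · have hAM := stieltjes_eq_runningMax hBdd hY hSAY hYc hA hlim x
    exact ⟨by linarith [hSAY x], hAM⟩
  · refine ⟨(continuous_runningMax hBdd hScont).sub hScont, hYM,
      (liminf_coe_eq_zero_iff hYM).2 fun _ => frequently_runningMax_sub_lt hBdd,
      continuous_runningMax hBdd hScont, ?_, fun x => by rw [runningMaxStieltjes_apply]; ring⟩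
    simpa only [sub_pos] using runningMaxStieltjes_measure_lt hBdd hScont
  · have hMA := runningMax_le_stieltjes hY hSAY x
    exact ⟨by linarith [hSAY x], hMA⟩

/-- Two-sided Skorokhod problem: for a continuous past-bounded `S : ℝ → ℝ`
with `S 0 = 0` and `M x = sup_{y ≤ x} S y`, the pair `(M - S, M)` is the unique pair `(Y, A)`
with `Y` continuous nonnegative with `liminf_{x→-∞} Y x = 0`, `A` continuous nondecreasing
whose Lebesgue–Stieltjes measure vanishes on `{Y > 0}`, and `S = A - Y`; moreover `(M - S, M)`
is pointwise minimal among all such pairs (without the liminf condition). -/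
theorem stmt_12 (S : ℝ → ℝ) (hScont : Continuous S) (hS0 : S 0 = 0)
    (hBdd : ∀ x : ℝ, BddAbove (S '' Set.Iic x)) :
    -- uniqueness: any solution of the Skorokhod problem equals (M - S, M)
    (∀ (Y : ℝ → ℝ) (A : StieltjesFunction ℝ), Continuous Y → (∀ x, 0 ≤ Y x) →
      Filter.liminf (fun x : ℝ => ((Y x : ℝ) : EReal)) Filter.atBot = 0 →
      Continuous (fun x => A x) → A.measure {x : ℝ | 0 < Y x} = 0 →
      (∀ x : ℝ, S x = A x - Y x) →
      ∀ x : ℝ, Y x = sSup (S '' Set.Iic x) - S x ∧ A x = sSup (S '' Set.Iic x)) ∧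
    -- existence: (M - S, M) satisfies conditions (i)-(iv)
    (∃ A : StieltjesFunction ℝ, (∀ x : ℝ, A x = sSup (S '' Set.Iic x)) ∧
      Continuous (fun x : ℝ => sSup (S '' Set.Iic x) - S x) ∧
      (∀ x : ℝ, 0 ≤ sSup (S '' Set.Iic x) - S x) ∧
      Filter.liminf (fun x : ℝ => ((sSup (S '' Set.Iic x) - S x : ℝ) : EReal))
        Filter.atBot = 0 ∧
      Continuous (fun x => A x) ∧
      A.measure {x : ℝ | 0 < sSup (S '' Set.Iic x) - S x} = 0 ∧
      (∀ x : ℝ, S x = A x - (sSup (S '' Set.Iic x) - S x))) ∧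
    -- minimality among all pairs satisfying (ii),(iii),(iv) with Ỹ continuous nonnegative
    (∀ (Y' : ℝ → ℝ) (A' : StieltjesFunction ℝ), Continuous Y' → (∀ x, 0 ≤ Y' x) →
      Continuous (fun x => A' x) → A'.measure {x : ℝ | 0 < Y' x} = 0 →
      (∀ x : ℝ, S x = A' x - Y' x) →
      ∀ x : ℝ, sSup (S '' Set.Iic x) - S x ≤ Y' x ∧ sSup (S '' Set.Iic x) ≤ A' x) :=
  stmt_12_general S hScont hBdd
end
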